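/- arXiv:2201.01718 — 5 statements merged into one kernel-verified Lean document; each statement's English description precedes it below -/
import Mathlib

section
/- If L is a finite-dimensional Lie algebra over any field such that every subalgebra of L is an intersection of maximal subalgebras (i.e., L is dually atomistic), then L is abelian, almost abelian, or semisimple. -/
open LieAlgebra Module

section Preamble

variable (F : Type*) [Field F] (L : Type*) [LieRing L] [LieAlgebra F L]

/-- `pm` is a `p`-mapping making the Lie algebra `L` into a restricted Lie algebra. -/
structure IsPMapping (p : ℕ) (pm : L → L) : Prop where
  ad_pow : ∀ x y : L, ⁅pm x, y⁆ = ((LieAlgebra.ad F L x) ^ p) y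
  smul_pow : ∀ (c : F) (x : L), pm (c • x) = c ^ p • pm x
  add_pm : ∀ x y : L, pm (x + y) - pm x - pm y ∈ LieSubalgebra.lieSpan F L {x, y}

variable {L}

/-- A restricted subalgebra: a subalgebra closed under the `p`-mapping. -/
def IsPSub (pm : L → L) (S : LieSubalgebra F L) : Prop := ∀ x ∈ S, pm x ∈ S

/-- The restricted subalgebra generated by a set. -/
def pSpan (pm : L → L) (s : Set L) : LieSubalgebra F L :=
  sInf {S : LieSubalgebra F L | IsPSub F pm S ∧ s ⊆ S}

/-- A maximal restricted subalgebra. -/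
def IsMaxPSub (pm : L → L) (M : LieSubalgebra F L) : Prop :=
  IsPSub F pm M ∧ M ≠ ⊤ ∧ ∀ S : LieSubalgebra F L, IsPSub F pm S → M < S → S = ⊤

/-- `U` is a maximal (restricted) subalgebra of the restricted subalgebra `V`. -/
def IsMaxIn (pm : L → L) (U V : LieSubalgebra F L) : Prop :=
  U < V ∧ ∀ W : LieSubalgebra F L, IsPSub F pm W → U < W → W < V → False

/-- A restricted quasi-ideal. -/
def IsPQuasiIdeal (pm : L → L) (S : LieSubalgebra F L) : Prop :=
  IsPSub F pm S ∧ ∀ H : LieSubalgebra F L, IsPSub F pm H →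
    ∀ s ∈ S, ∀ h ∈ H, ⁅s, h⁆ ∈ S.toSubmodule ⊔ H.toSubmodule

/-- A `p`-nilpotent element. -/
def IsPNilpotentElt (pm : L → L) (x : L) : Prop := ∃ n : ℕ, 0 < n ∧ pm^[n] x = 0

variable (L)

/-- Every restricted subalgebra is an intersection of maximal restricted subalgebras. -/
def DuallyAtomisticP (pm : L → L) : Prop :=
  ∀ S : LieSubalgebra F L, IsPSub F pm S →
    ∃ 𝓜 : Set (LieSubalgebra F L), (∀ M ∈ 𝓜, IsMaxPSub F pm M) ∧ S = sInf 𝓜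

/-- Every (ordinary) subalgebra is an intersection of maximal (ordinary) subalgebras. -/
def DuallyAtomistic : Prop :=
  ∀ S : LieSubalgebra F L,
    ∃ 𝓜 : Set (LieSubalgebra F L),
      (∀ M ∈ 𝓜, M ≠ ⊤ ∧ ∀ S' : LieSubalgebra F L, M < S' → S' = ⊤) ∧ S = sInf 𝓜

/-- An almost abelian Lie algebra: `L = F x ∔ A` with `A` an abelian ideal on which
`ad x` acts as the identity. -/
def IsAlmostAbelian : Prop :=
  ∃ (x : L) (A : LieIdeal F L), IsLieAbelian A ∧ (∀ a ∈ A, ⁅x, a⁆ = a) ∧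
    x ∉ A ∧ Submodule.span F {x} ⊔ A.toSubmodule = ⊤

/-- `N` is the nilradical of `L`: the largest nilpotent ideal. -/
def IsNilradical (N : LieIdeal F L) : Prop :=
  LieModule.IsNilpotent N N ∧ ∀ I : LieIdeal F L, LieModule.IsNilpotent I I → I ≤ N

/-- Upper semimodularity of the lattice of restricted subalgebras. -/
def UpperSemimodularP (pm : L → L) : Prop :=
  ∀ S T : LieSubalgebra F L, IsPSub F pm S → IsPSub F pm T →
    IsMaxIn F pm (S ⊓ T) T → IsMaxIn F pm S (pSpan F pm ((S : Set L) ∪ (T : Set L)))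

/-- Lower semimodularity of the lattice of restricted subalgebras. -/
def LowerSemimodularP (pm : L → L) : Prop :=
  ∀ U B : LieSubalgebra F L, IsPSub F pm U → IsPSub F pm B →
    IsMaxIn F pm U (pSpan F pm ((U : Set L) ∪ (B : Set L))) → IsMaxIn F pm (U ⊓ B) B

/-- `L` is supersolvable: it admits a complete flag of ideals. -/
def IsSupersolvable : Prop :=
  ∃ (n : ℕ) (f : Fin (n + 1) → LieIdeal F L), Monotone f ∧ f 0 = ⊥ ∧ f (Fin.last n) = ⊤ ∧
    ∀ j : Fin (n + 1), Module.finrank F (f j : Submodule F L) = (j : ℕ)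

end Preamble

/-!
If the radical is nonzero, an atom of the ideal lattice below the last nonzero term of its
derived series is an abelian ideal, and dual atomisticity forces it to be a line `F a`, so that
`⁅x, a⁆ = λ x • a`. The basic tool: if `M` is a maximal subalgebra and `C ⊄ M` an
`ad`-invariant subspace, then `M + C = L`, so every `u ∈ M` centralised by `C` has `⁅L, u⁆ ⊆ M`;
intersecting an ideal with such an `M` therefore gives an ideal, to which minimality applies.

If `λ = 0`, then `a` is central, every bracket lies in each maximal subalgebra missing a nonzero
central element, and this forces `L` to be abelian. If `λ ≠ 0`, every `b` in the centraliser
`K = ker λ` of `a` is a weight vector of weight `λ`: an atom below the ideal generated by `b`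
is spanned by such a weight vector `v`, and a maximal subalgebra containing `b` but not `v`
would cut that ideal down. Hence `L = F x₀ ⊕ K` with `λ x₀ = 1` is almost abelian.
-/

section DuallyAtomistic

variable {F : Type*} [Field F] {L : Type*} [LieRing L] [LieAlgebra F L]

theorem Submodule.notMem_span_singleton_add {K V : Type*} [DivisionRing K] [AddCommGroup V]
    [Module K V] {a v : V} (ha : a ≠ 0) (hv : v ∉ K ∙ a) : a ∉ K ∙ (a + v) := by
  intro hmem
  obtain ⟨t, ht⟩ := Submodule.mem_span_singleton.mp hmem
  have ht0 : t ≠ 0 := by rintro rfl; exact ha (by simpa using ht.symm)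
  have htv : t • v = (1 - t) • a := calc
    t • v = t • (a + v) - t • a := by rw [smul_add, add_sub_cancel_left]
    _ = (1 - t) • a := by rw [ht, sub_smul, one_smul]
  apply hv
  rw [← inv_smul_smul₀ ht0 v, htv, smul_smul]
  exact Submodule.smul_mem _ _ (Submodule.mem_span_singleton_self a)

theorem Submodule.le_span_singleton_of_disjoint {R V : Type*} [Ring R] [AddCommGroup V]
    [Module R V] {P B : Submodule R V} {a c : V} (hPa : P ⊔ R ∙ a = ⊤) (hac : a + c ∈ P)
    (hc : c ∈ B) (hBP : Disjoint B P) : B ≤ R ∙ c := by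
  intro u hu
  obtain ⟨m, hm, w, hw, rfl⟩ := Submodule.mem_sup.mp (hPa ▸ Submodule.mem_top : u ∈ P ⊔ R ∙ a)
  obtain ⟨s, rfl⟩ := Submodule.mem_span_singleton.mp hw
  have hzero : m + s • a + s • c = 0 := by
    refine Submodule.disjoint_def.mp hBP _ (B.add_mem hu (B.smul_mem s hc)) ?_
    rw [add_assoc, ← smul_add]
    exact P.add_mem hm (P.smul_mem s hac)
  exact Submodule.mem_span_singleton.mpr ⟨-s, by rw [neg_smul, neg_eq_of_add_eq_zero_left hzero]⟩

variable (F) in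
def LieSubalgebra.spanSingleton (s : L) : LieSubalgebra F L where
  toSubmodule := F ∙ s
  lie_mem' {x y} hx hy := by
    obtain ⟨c, rfl⟩ := Submodule.mem_span_singleton.mp hx
    obtain ⟨d, rfl⟩ := Submodule.mem_span_singleton.mp hy
    simp [smul_lie, lie_smul]

theorem DuallyAtomistic.exists_isCoatom (h : DuallyAtomistic F L) {s t : L} (ht : t ∉ F ∙ s) :
    ∃ M : LieSubalgebra F L, IsCoatom M ∧ s ∈ M ∧ t ∉ M := by
  obtain ⟨𝓜, h𝓜, hs⟩ := h (LieSubalgebra.spanSingleton F s)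
  have ht' : t ∉ sInf 𝓜 := hs ▸ ht
  simp only [← SetLike.mem_coe, LieSubalgebra.coe_sInf, Set.mem_iInter₂, not_forall] at ht'
  obtain ⟨M, hM, htM⟩ := ht'
  exact ⟨M, h𝓜 M hM, (hs ▸ sInf_le hM : _ ≤ M) (Submodule.mem_span_singleton_self s), htM⟩

def LieSubalgebra.supSubmodule (M : LieSubalgebra F L) (C : Submodule F L)
    (hC : ∀ x : L, ∀ c ∈ C, ⁅x, c⁆ ∈ C) : LieSubalgebra F L where
  toSubmodule := M.toSubmodule ⊔ C
  lie_mem' {x y} hx hy := by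
    obtain ⟨m, hm, c, hc, rfl⟩ := Submodule.mem_sup.mp hx
    obtain ⟨m', hm', c', hc', rfl⟩ := Submodule.mem_sup.mp hy
    rw [add_lie, lie_add, ← lie_skew c]
    exact add_mem (add_mem (Submodule.mem_sup_left (M.lie_mem hm hm'))
      (Submodule.mem_sup_right (hC _ _ hc'))) (Submodule.mem_sup_right (neg_mem (hC _ _ hc)))

variable {M : LieSubalgebra F L}

theorem IsCoatom.sup_eq_top_of_lie_mem (hM : IsCoatom M) {C : Submodule F L}
    (hC : ∀ x : L, ∀ c ∈ C, ⁅x, c⁆ ∈ C) {t : L} (htC : t ∈ C) (htM : t ∉ M) :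
    M.toSubmodule ⊔ C = ⊤ := by
  have hlt : M < M.supSubmodule C hC := SetLike.lt_iff_le_and_exists.mpr
    ⟨fun _ hx => Submodule.mem_sup_left hx, t, Submodule.mem_sup_right htC, htM⟩
  exact (congrArg LieSubalgebra.toSubmodule (hM.2 _ hlt)).trans LieSubalgebra.top_toSubmodule

theorem LieSubalgebra.lie_mem_of_sup_eq_top {C : Submodule F L} (hMC : M.toSubmodule ⊔ C = ⊤)
    {u : L} (hu : u ∈ M) (hCu : ∀ c ∈ C, ⁅c, u⁆ = 0) (x : L) : ⁅x, u⁆ ∈ M := by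
  obtain ⟨m, hm, c, hc, rfl⟩ :=
    Submodule.mem_sup.mp (hMC ▸ Submodule.mem_top : x ∈ M.toSubmodule ⊔ C)
  rw [add_lie, hCu c hc, add_zero]
  exact M.lie_mem hm hu

def LieIdeal.infLieSubalgebra (B : LieIdeal F L) (M : LieSubalgebra F L)
    (hBM : ∀ u ∈ B, u ∈ M → ∀ x : L, ⁅x, u⁆ ∈ M) : LieIdeal F L where
  toSubmodule := B.toSubmodule ⊓ M.toSubmodule
  lie_mem {x u} hu := ⟨B.lie_mem hu.1, hBM u hu.1 hu.2 x⟩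

theorem LieIdeal.infLieSubalgebra_le {B : LieIdeal F L}
    {hBM : ∀ u ∈ B, u ∈ M → ∀ x : L, ⁅x, u⁆ ∈ M} : LieIdeal.infLieSubalgebra B M hBM ≤ B :=
  fun _ hu => hu.1

theorem DuallyAtomistic.exists_lie_mem_span_singleton_of_isAtom (h : DuallyAtomistic F L)
    {B : LieIdeal F L} (hB : IsAtom B) (hBab : ∀ u ∈ B, ∀ v ∈ B, ⁅u, v⁆ = 0) :
    ∃ a : L, a ≠ 0 ∧ ∀ x : L, ⁅x, a⁆ ∈ F ∙ a := by
  obtain ⟨a, haB, ha⟩ :=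
    Submodule.exists_mem_ne_zero_of_ne_bot ((LieSubmodule.toSubmodule_eq_bot B).not.mpr hB.1)
  have hBa : B.toSubmodule ≤ F ∙ a := by
    intro t htB
    by_contra hta
    obtain ⟨M, hM, haM, htM⟩ := h.exists_isCoatom hta
    have hMB := hM.sup_eq_top_of_lie_mem (fun _ _ hc => B.lie_mem hc) htB htM
    let J := LieIdeal.infLieSubalgebra B M fun u hu huM =>
      LieSubalgebra.lie_mem_of_sup_eq_top hMB huM fun c hc => hBab c hc u hu
    have haJ : a ∈ J := ⟨haB, haM⟩
    have hJ : J = B := (hB.le_iff.mp LieIdeal.infLieSubalgebra_le).resolve_left fun hJ =>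
      ha ((LieSubmodule.mem_bot a).mp (hJ.le haJ))
    exact htM (hJ.ge htB).2
  exact ⟨a, ha, fun x => hBa (B.lie_mem haB)⟩

section WeightVector

variable {a : L} {lam : L → F}

theorem IsCoatom.sup_span_singleton_eq_top (hM : IsCoatom M) (hla : ∀ x : L, ⁅x, a⁆ = lam x • a)
    (haM : a ∉ M) : M.toSubmodule ⊔ F ∙ a = ⊤ := by
  refine hM.sup_eq_top_of_lie_mem (fun x c hc => ?_) (Submodule.mem_span_singleton_self a) haM
  obtain ⟨t, rfl⟩ := Submodule.mem_span_singleton.mp hc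
  rw [lie_smul, hla, smul_smul]
  exact Submodule.smul_mem _ _ (Submodule.mem_span_singleton_self a)

theorem IsCoatom.lie_mem_of_weight_eq_zero (hM : IsCoatom M) (hla : ∀ x : L, ⁅x, a⁆ = lam x • a)
    (haM : a ∉ M) {u : L} (hu : u ∈ M) (hlu : lam u = 0) (x : L) : ⁅x, u⁆ ∈ M := by
  refine LieSubalgebra.lie_mem_of_sup_eq_top (hM.sup_span_singleton_eq_top hla haM) hu
    (fun c hc => ?_) x
  obtain ⟨s, rfl⟩ := Submodule.mem_span_singleton.mp hc
  rw [smul_lie, ← lie_skew, hla, hlu, zero_smul, neg_zero, smul_zero]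

theorem IsCoatom.lie_mem_of_central (hM : IsCoatom M) {z : L} (hz : ∀ x : L, ⁅x, z⁆ = 0)
    (hzM : z ∉ M) (x y : L) : ⁅x, y⁆ ∈ M := by
  have hzw : ∀ x : L, ⁅x, z⁆ = (0 : L → F) x • z := fun x => by rw [hz, Pi.zero_apply, zero_smul]
  obtain ⟨m, hm, c, hc, rfl⟩ := Submodule.mem_sup.mp
    ((hM.sup_span_singleton_eq_top hzw hzM).symm ▸ Submodule.mem_top : y ∈ _)
  obtain ⟨t, rfl⟩ := Submodule.mem_span_singleton.mp hc
  rw [lie_add, lie_smul, hz, smul_zero, add_zero]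
  exact hM.lie_mem_of_weight_eq_zero hzw hzM hm rfl x

theorem DuallyAtomistic.isLieAbelian_of_central (h : DuallyAtomistic F L) {z : L} (hz0 : z ≠ 0)
    (hz : ∀ x : L, ⁅x, z⁆ = 0) : IsLieAbelian L := by
  have hderived : ∀ x y : L, ⁅x, y⁆ ∈ F ∙ z := by
    intro x y
    by_contra hw
    obtain ⟨M, hM, hwM, hzM⟩ := h.exists_isCoatom (Submodule.notMem_span_singleton_add hz0 hw)
    exact hzM (by simpa using sub_mem hwM (hM.lie_mem_of_central hz hzM x y))
  have hcentral : ∀ x y w : L, ⁅w, ⁅x, y⁆⁆ = 0 := fun x y w => by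
    obtain ⟨c, hc⟩ := Submodule.mem_span_singleton.mp (hderived x y)
    rw [← hc, lie_smul, hz, smul_zero]
  refine ⟨fun x y => ?_⟩
  by_contra hw
  by_cases hxw : ⁅x, y⁆ ∈ F ∙ x
  · obtain ⟨c, hc⟩ := Submodule.mem_span_singleton.mp hxw
    have hcw : c • ⁅x, y⁆ = 0 := by rw [← smul_lie, hc, ← lie_skew, hcentral, neg_zero]
    rcases smul_eq_zero.mp hcw with rfl | hw'
    · exact hw (hc.symm.trans (zero_smul F x))
    · exact hw hw'
  · obtain ⟨M, hM, -, hwM⟩ := h.exists_isCoatom hxw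
    exact hwM (hM.lie_mem_of_central (hcentral x y) hwM x y)

def LieIdeal.centralizerOfWeightVector (hla : ∀ x : L, ⁅x, a⁆ = lam x • a) : LieIdeal F L where
  carrier := {x | ⁅x, a⁆ = 0}
  add_mem' {x y} (hx : ⁅x, a⁆ = 0) (hy : ⁅y, a⁆ = 0) := by
    change ⁅x + y, a⁆ = 0
    rw [add_lie, hx, hy, add_zero]
  zero_mem' := zero_lie a
  smul_mem' c x (hx : ⁅x, a⁆ = 0) := by
    change ⁅c • x, a⁆ = 0
    rw [smul_lie, hx, smul_zero]
  lie_mem {y x} (hx : ⁅x, a⁆ = 0) := by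
    change ⁅⁅y, x⁆, a⁆ = 0
    rw [lie_lie, hx, lie_zero, hla y, lie_smul, hx, smul_zero, sub_zero]

theorem weight_eq_zero_of_lie_eq_zero (ha : a ≠ 0) (hla : ∀ x : L, ⁅x, a⁆ = lam x • a) {u : L}
    (hu : ⁅u, a⁆ = 0) : lam u = 0 :=
  (smul_eq_zero.mp ((hla u).symm.trans hu)).resolve_right ha

theorem DuallyAtomistic.lie_eq_smul_of_lie_mem_span_singleton (h : DuallyAtomistic F L)
    (ha : a ≠ 0) (hla : ∀ x : L, ⁅x, a⁆ = lam x • a) {v : L} (hv : ∀ x : L, ⁅x, v⁆ ∈ F ∙ v)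
    (hva : v ∉ F ∙ a) (hav : ⁅a, v⁆ = 0) (x : L) : ⁅x, v⁆ = lam x • v := by
  choose mu hmu using fun x => Submodule.mem_span_singleton.mp (hv x)
  obtain ⟨M, hM, havM, haM⟩ := h.exists_isCoatom (Submodule.notMem_span_singleton_add ha hva)
  have hlav : lam (a + v) = 0 := weight_eq_zero_of_lie_eq_zero ha hla (by
    rw [add_lie, lie_self, ← lie_skew, hav, neg_zero, add_zero])
  have hdiff : (lam x - mu x) • a ∈ M := by
    have hdiff_eq : (lam x - mu x) • a = ⁅x, a + v⁆ - mu x • (a + v) := by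
      rw [lie_add, hla, ← hmu]
      module
    rw [hdiff_eq]
    exact sub_mem (hM.lie_mem_of_weight_eq_zero hla haM havM hlav x) (M.smul_mem _ havM)
  have hlam : lam x = mu x := by
    by_contra hne
    exact haM ((Submodule.smul_mem_iff M.toSubmodule (sub_ne_zero.mpr hne)).mp hdiff)
  rw [← hmu, hlam]

theorem DuallyAtomistic.exists_weight_vector_of_isAtom (h : DuallyAtomistic F L) (ha : a ≠ 0)
    (hla : ∀ x : L, ⁅x, a⁆ = lam x • a) {B : LieIdeal F L} (hB : IsAtom B)
    (hBK : B ≤ LieIdeal.centralizerOfWeightVector hla) :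
    ∃ v ∈ B, v ≠ 0 ∧ ∀ x : L, ⁅x, v⁆ = lam x • v := by
  by_cases haB : a ∈ B
  · exact ⟨a, haB, ha, hla⟩
  obtain ⟨c, hcB, hc0⟩ :=
    Submodule.exists_mem_ne_zero_of_ne_bot ((LieSubmodule.toSubmodule_eq_bot B).not.mpr hB.1)
  have hca : c ∉ F ∙ a := fun hc => by
    obtain ⟨t, rfl⟩ := Submodule.mem_span_singleton.mp hc
    exact haB ((Submodule.smul_mem_iff B.toSubmodule (left_ne_zero_of_smul hc0)).mp hcB)
  obtain ⟨M, hM, hacM, haM⟩ := h.exists_isCoatom (Submodule.notMem_span_singleton_add ha hca)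
  let J := LieIdeal.infLieSubalgebra B M fun u hu huM =>
    hM.lie_mem_of_weight_eq_zero hla haM huM (weight_eq_zero_of_lie_eq_zero ha hla (hBK hu))
  have hcJ : c ∉ J := fun hcJ => haM (by simpa using sub_mem hacM hcJ.2)
  have hJ : J = ⊥ := (hB.le_iff.mp LieIdeal.infLieSubalgebra_le).resolve_right fun hJ =>
    hcJ (hJ.ge hcB)
  have hBc : B.toSubmodule ≤ F ∙ c :=
    Submodule.le_span_singleton_of_disjoint (hM.sup_span_singleton_eq_top hla haM) hacM hcB
      (Submodule.disjoint_def.mpr fun u hu huM => (LieSubmodule.mem_bot u).mp (hJ.le ⟨hu, huM⟩))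
  refine ⟨c, hcB, hc0, h.lie_eq_smul_of_lie_mem_span_singleton ha hla
    (fun x => hBc (B.lie_mem hcB)) hca ?_⟩
  rw [← lie_skew, hBK hcB, neg_zero]

theorem DuallyAtomistic.lie_eq_smul_of_lie_eq_zero [FiniteDimensional F L]
    (h : DuallyAtomistic F L) (ha : a ≠ 0) (hla : ∀ x : L, ⁅x, a⁆ = lam x • a) {b : L}
    (hb : ⁅b, a⁆ = 0) (x : L) : ⁅x, b⁆ = lam x • b := by
  obtain rfl | hb0 := eq_or_ne b 0
  · rw [lie_zero, smul_zero]
  let I := LieSubmodule.lieSpan F L {b}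
  have hbI : b ∈ I := LieSubmodule.subset_lieSpan rfl
  have hIK : I ≤ LieIdeal.centralizerOfWeightVector hla :=
    LieSubmodule.lieSpan_le.mpr (Set.singleton_subset_iff.mpr hb)
  obtain ⟨B, hB, hBI⟩ := (eq_bot_or_exists_atom_le I).resolve_left fun hI =>
    hb0 ((LieSubmodule.mem_bot b).mp (hI ▸ hbI))
  obtain ⟨v, hvB, hv0, hlv⟩ := h.exists_weight_vector_of_isAtom ha hla hB (hBI.trans hIK)
  by_cases hvb : v ∈ F ∙ b
  · obtain ⟨t, rfl⟩ := Submodule.mem_span_singleton.mp hvb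
    have hxtb := hlv x
    rw [lie_smul, smul_comm] at hxtb
    exact smul_right_injective L (left_ne_zero_of_smul hv0) hxtb
  obtain ⟨M, hM, hbM, hvM⟩ := h.exists_isCoatom hvb
  let J := LieIdeal.infLieSubalgebra I M fun u hu huM =>
    hM.lie_mem_of_weight_eq_zero hlv hvM huM (weight_eq_zero_of_lie_eq_zero ha hla (hIK hu))
  have hIJ : I ≤ J := LieSubmodule.lieSpan_le.mpr (Set.singleton_subset_iff.mpr ⟨hbI, hbM⟩)
  exact absurd (hIJ (hBI hvB)).2 hvM

theorem DuallyAtomistic.isAlmostAbelian_of_weight_ne_zero [FiniteDimensional F L]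
    (h : DuallyAtomistic F L) (ha : a ≠ 0) (hla : ∀ x : L, ⁅x, a⁆ = lam x • a) {x₁ : L}
    (hx₁ : lam x₁ ≠ 0) : IsAlmostAbelian F L := by
  set x₀ := (lam x₁)⁻¹ • x₁
  have hx₀a : ⁅x₀, a⁆ = a := by rw [smul_lie, hla, smul_smul, inv_mul_cancel₀ hx₁, one_smul]
  have hlam : lam x₀ = 1 :=
    smul_left_injective F ha ((hla x₀).symm.trans (hx₀a.trans (one_smul F a).symm))
  refine ⟨x₀, LieIdeal.centralizerOfWeightVector hla, ⟨fun p q => Subtype.ext ?_⟩,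
    fun u hu => ?_, fun hx₀ => ha (hx₀a ▸ hx₀), ?_⟩
  · change ⁅(p : L), (q : L)⁆ = 0
    rw [h.lie_eq_smul_of_lie_eq_zero ha hla q.2, weight_eq_zero_of_lie_eq_zero ha hla p.2,
      zero_smul]
  · rw [h.lie_eq_smul_of_lie_eq_zero ha hla hu, hlam, one_smul]
  · refine eq_top_iff.mpr fun y _ => Submodule.mem_sup.mpr
      ⟨lam y • x₀, Submodule.smul_mem _ _ (Submodule.mem_span_singleton_self x₀), y - lam y • x₀,
        ?_, add_sub_cancel _ _⟩
    change ⁅y - lam y • x₀, a⁆ = 0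
    rw [sub_lie, smul_lie, hx₀a, hla, sub_self]

end WeightVector

theorem LieAlgebra.exists_isAtom_abelian_of_radical_ne_bot [FiniteDimensional F L]
    (hrad : radical F L ≠ ⊥) :
    ∃ B : LieIdeal F L, IsAtom B ∧ ∀ u ∈ B, ∀ v ∈ B, ⁅u, v⁆ = 0 := by
  let A := derivedAbelianOfIdeal (radical F L)
  have hA : A ≠ ⊥ := fun hA => hrad ((abelian_of_solvable_ideal_eq_bot_iff _).mp hA)
  obtain ⟨B, hB, hBA⟩ := (eq_bot_or_exists_atom_le A).resolve_left hA
  refine ⟨B, hB, fun u hu v hv => ?_⟩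
  exact congrArg Subtype.val ((abelian_derivedAbelianOfIdeal (radical F L)).trivial
    ⟨u, hBA hu⟩ ⟨v, hBA hv⟩)

end DuallyAtomistic

/-- a finite-dimensional dually atomistic Lie algebra over any field is
abelian, almost abelian, or semisimple. -/
theorem dually_atomistic_abelian_or_almostAbelian_or_semisimple
    (F : Type*) [Field F] (L : Type*) [LieRing L] [LieAlgebra F L]
    [FiniteDimensional F L] (h : DuallyAtomistic F L) :
    IsLieAbelian L ∨ IsAlmostAbelian F L ∨ LieAlgebra.radical F L = ⊥ := by
  by_cases hrad : LieAlgebra.radical F L = ⊥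
  · exact Or.inr (Or.inr hrad)
  obtain ⟨B, hB, hBab⟩ := LieAlgebra.exists_isAtom_abelian_of_radical_ne_bot hrad
  obtain ⟨a, ha, haa⟩ := h.exists_lie_mem_span_singleton_of_isAtom hB hBab
  choose lam hlam using fun x => Submodule.mem_span_singleton.mp (haa x)
  have hla : ∀ x : L, ⁅x, a⁆ = lam x • a := fun x => (hlam x).symm
  by_cases hlam0 : ∀ x, lam x = 0
  · exact Or.inl (h.isLieAbelian_of_central ha fun x => by rw [hla, hlam0, zero_smul])
  · push Not at hlam0
    obtain ⟨x₁, hx₁⟩ := hlam0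
    exact Or.inr (Or.inl (h.isAlmostAbelian_of_weight_ne_zero ha hla hx₁))
end

section
/- If L is a dually atomistic restricted Lie algebra (every restricted subalgebra is an intersection of maximal restricted subalgebras), then the nilradical N(L) of L is abelian. -/
open LieAlgebra Module

/-! Write `N_k` for `lowerCentralIdeal N k`, so `N_0 = N` and `N_(k+1) = ⁅N, N_k⁆`. The
elements `x` with `⁅x, L⁆ ⊆ N_1` and `⁅x, N_k⁆ ⊆ N_(k+2)` form an ideal `C ⊇ N_1` that is
closed under the `p`-map (as `ad (x^[p]) = (ad x)^p`) and lies in `N`, because `N + C` is a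
nilpotent ideal by Engel's theorem. For a maximal restricted subalgebra `M`, either `C ⊆ M`,
or `M + C = L`; then `N = (M ∩ N) + C` and descending along the `N_k` gives `N_1 ⊆ M`. So
`⁅N, N⁆ = N_1` lies in every maximal restricted subalgebra, hence in their intersection,
which is `0`. -/

section LowerCentralIdeal

variable {R L : Type*} [CommRing R] [LieRing L] [LieAlgebra R L] (N : LieIdeal R L)

def lowerCentralIdeal (k : ℕ) : LieIdeal R L := (fun J => ⁅N, J⁆)^[k] N

@[simp]
lemma lowerCentralIdeal_zero : lowerCentralIdeal N 0 = N := rfl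

lemma lowerCentralIdeal_succ (k : ℕ) :
    lowerCentralIdeal N (k + 1) = ⁅N, lowerCentralIdeal N k⁆ :=
  Function.iterate_succ_apply' _ _ _

lemma lowerCentralIdeal_one : lowerCentralIdeal N 1 = ⁅N, N⁆ := rfl

lemma lowerCentralIdeal_antitone : Antitone (lowerCentralIdeal N) :=
  antitone_nat_of_succ_le fun k => by
    rw [lowerCentralIdeal_succ]; exact LieSubmodule.lie_le_right _ _

variable {N}

lemma lie_mem_lowerCentralIdeal_succ {x y : L} {k : ℕ} (hx : x ∈ N)
    (hy : y ∈ lowerCentralIdeal N k) : ⁅x, y⁆ ∈ lowerCentralIdeal N (k + 1) := by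
  rw [lowerCentralIdeal_succ]; exact LieSubmodule.lie_mem_lie hx hy

lemma lie_mem_lowerCentralIdeal_add_two {x y : L} {k : ℕ} (hx : x ∈ lowerCentralIdeal N 1)
    (hy : y ∈ lowerCentralIdeal N k) : ⁅x, y⁆ ∈ lowerCentralIdeal N (k + 2) := by
  rw [lowerCentralIdeal_one, ← LieSubmodule.mem_toSubmodule,
    LieSubmodule.lieIdeal_oper_eq_linear_span'] at hx
  induction hx using Submodule.span_induction generalizing y k with
  | mem x hx =>
    obtain ⟨u, hu, v, hv, rfl⟩ := hx
    rw [lie_lie]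
    exact sub_mem (lie_mem_lowerCentralIdeal_succ hu (lie_mem_lowerCentralIdeal_succ hv hy))
      (lie_mem_lowerCentralIdeal_succ hv (lie_mem_lowerCentralIdeal_succ hu hy))
  | zero => simp
  | add x x' _ _ hx hx' => rw [add_lie]; exact add_mem (hx hy) (hx' hy)
  | smul c x _ hx => rw [smul_lie]; exact Submodule.smul_mem _ c (hx hy)

variable (N)

lemma exists_lowerCentralIdeal_eq_bot [LieModule.IsNilpotent N N] :
    ∃ k, lowerCentralIdeal N k = ⊥ := by
  obtain ⟨k, hk⟩ := LieModule.IsNilpotent.nilpotent R N N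
  have h : ∀ j, LieSubmodule.toSubmodule (lowerCentralIdeal N j) ≤
      (LieSubmodule.toSubmodule (LieModule.lowerCentralSeries R N N j)).map
        (LieSubmodule.toSubmodule N).subtype := by
    intro j
    induction j with
    | zero => exact fun x hx => ⟨⟨x, hx⟩, LieSubmodule.mem_top _, rfl⟩
    | succ j ih =>
      rw [lowerCentralIdeal_succ, LieSubmodule.lieIdeal_oper_eq_linear_span', Submodule.span_le]
      rintro _ ⟨u, hu, v, hv, rfl⟩
      obtain ⟨w, hw, rfl⟩ := ih hv
      refine ⟨⁅(⟨u, hu⟩ : N), w⁆, ?_, rfl⟩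
      rw [LieModule.lowerCentralSeries_succ]
      exact LieSubmodule.lie_mem_lie (LieSubmodule.mem_top _) hw
  refine ⟨k, eq_bot_iff.mpr fun x hx => ?_⟩
  obtain ⟨y, hy, rfl⟩ := h k hx
  simp_all

end LowerCentralIdeal

section ShiftTwoIdeal

variable {R L : Type*} [CommRing R] [LieRing L] [LieAlgebra R L] (N : LieIdeal R L)

def shiftTwoIdeal : LieIdeal R L where
  carrier := {x | (∀ y, ⁅x, y⁆ ∈ lowerCentralIdeal N 1) ∧
    ∀ k, ∀ y ∈ lowerCentralIdeal N k, ⁅x, y⁆ ∈ lowerCentralIdeal N (k + 2)}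
  zero_mem' := by simp
  add_mem' := by
    rintro a b ⟨ha, ha'⟩ ⟨hb, hb'⟩
    refine ⟨fun y => ?_, fun k y hy => ?_⟩ <;> rw [add_lie]
    exacts [add_mem (ha y) (hb y), add_mem (ha' k y hy) (hb' k y hy)]
  smul_mem' := by
    rintro c a ⟨ha, ha'⟩
    refine ⟨fun y => ?_, fun k y hy => ?_⟩ <;> rw [smul_lie]
    exacts [Submodule.smul_mem _ c (ha y), Submodule.smul_mem _ c (ha' k y hy)]
  lie_mem := by
    rintro x a ⟨ha, -⟩
    have hxa : ⁅x, a⁆ ∈ lowerCentralIdeal N 1 := by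
      rw [← lie_skew]; exact neg_mem (ha x)
    exact ⟨fun y => lie_mem_left R L _ _ y hxa,
      fun k y hy => lie_mem_lowerCentralIdeal_add_two hxa hy⟩

variable {N}

lemma lowerCentralIdeal_one_le_shiftTwoIdeal : lowerCentralIdeal N 1 ≤ shiftTwoIdeal N :=
  fun _ hx => ⟨fun y => lie_mem_left R L _ _ y hx,
    fun _ _ hy => lie_mem_lowerCentralIdeal_add_two hx hy⟩

lemma pow_ad_mem_lowerCentralIdeal {x : L} (hx : x ∈ shiftTwoIdeal N) (m : ℕ) {k : ℕ} {y : L}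
    (hy : y ∈ lowerCentralIdeal N k) : (ad R L x ^ m) y ∈ lowerCentralIdeal N (k + 2 * m) := by
  induction m with
  | zero => simpa using hy
  | succ m ih =>
    rw [pow_succ', Module.End.mul_apply, ad_apply]
    exact hx.2 _ _ ih

end ShiftTwoIdeal

section Engel

variable {R L : Type*} [CommRing R] [LieRing L] [LieAlgebra R L] {N : LieIdeal R L}

lemma lie_mem_lowerCentralIdeal_of_mem_sup_shiftTwoIdeal {z : L} (hz : z ∈ N ⊔ shiftTwoIdeal N)
    (k : ℕ) {y : L} (hy : y ∈ lowerCentralIdeal N k) : ⁅z, y⁆ ∈ lowerCentralIdeal N (k + 1) := by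
  obtain ⟨n, hn, c, hc, rfl⟩ := LieSubmodule.mem_sup _ _ _ |>.mp hz
  rw [add_lie]
  exact add_mem (lie_mem_lowerCentralIdeal_succ hn hy)
    (lowerCentralIdeal_antitone N (by omega) (hc.2 k y hy))

lemma lie_mem_of_mem_sup_shiftTwoIdeal {z : L} (hz : z ∈ N ⊔ shiftTwoIdeal N) (y : L) :
    ⁅z, y⁆ ∈ N := by
  obtain ⟨n, hn, c, hc, rfl⟩ := LieSubmodule.mem_sup _ _ _ |>.mp hz
  rw [add_lie]
  exact add_mem (lie_mem_left R L N n y hn)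
    (lowerCentralIdeal_antitone N (Nat.zero_le 1) (hc.1 y))

lemma isNilpotent_sup_shiftTwoIdeal [IsNoetherian R L] {K : ℕ}
    (hK : lowerCentralIdeal N K = ⊥) :
    LieModule.IsNilpotent ↥(N ⊔ shiftTwoIdeal N) ↥(N ⊔ shiftTwoIdeal N) := by
  rw [LieModule.isNilpotent_iff_forall' (R := R)]
  intro z
  refine ⟨K + 1, LinearMap.ext fun m => Subtype.ext ?_⟩
  suffices ∀ k, (((LieModule.toEnd R _ _ z ^ (k + 1)) m : ↥(N ⊔ shiftTwoIdeal N)) : L) ∈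
      lowerCentralIdeal N k by
    rw [LinearMap.zero_apply, ZeroMemClass.coe_zero]
    exact (LieSubmodule.mem_bot _).mp (hK ▸ this K)
  intro k
  induction k with
  | zero => simpa using lie_mem_of_mem_sup_shiftTwoIdeal z.2 m
  | succ k ih =>
    rw [pow_succ', Module.End.mul_apply, LieModule.toEnd_apply_apply]
    exact lie_mem_lowerCentralIdeal_of_mem_sup_shiftTwoIdeal z.2 k ih

end Engel

section Descent

variable {R L : Type*} [CommRing R] [LieRing L] [LieAlgebra R L] {N : LieIdeal R L}
  {W : LieSubalgebra R L}

/-- `E` is `shiftTwoIdeal N` for `k = 0` and `lowerCentralIdeal N (k + 1)` afterwards. -/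
lemma lowerCentralIdeal_succ_le_sup {k : ℕ} {E : Submodule R L}
    (hE : ∀ u ∈ N, ∀ b ∈ E, ⁅u, b⁆ ∈ lowerCentralIdeal N (k + 2))
    (hN : LieSubmodule.toSubmodule N ≤
      W.toSubmodule ⊓ LieSubmodule.toSubmodule N ⊔ LieSubmodule.toSubmodule (shiftTwoIdeal N))
    (hk : LieSubmodule.toSubmodule (lowerCentralIdeal N k) ≤
      W.toSubmodule ⊓ LieSubmodule.toSubmodule (lowerCentralIdeal N k) ⊔ E) :
    LieSubmodule.toSubmodule (lowerCentralIdeal N (k + 1)) ≤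
      W.toSubmodule ⊓ LieSubmodule.toSubmodule (lowerCentralIdeal N (k + 1)) ⊔
        LieSubmodule.toSubmodule (lowerCentralIdeal N (k + 2)) := by
  conv_lhs => rw [lowerCentralIdeal_succ, LieSubmodule.lieIdeal_oper_eq_linear_span']
  rw [Submodule.span_le]
  rintro _ ⟨u, hu, v, hv, rfl⟩
  obtain ⟨a, ⟨haW, ha⟩, b, hb, rfl⟩ := Submodule.mem_sup.mp (hk hv)
  obtain ⟨w, ⟨hwW, hwN⟩, z, hz, rfl⟩ := Submodule.mem_sup.mp (hN hu)
  rw [lie_add, add_lie]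
  refine add_mem (add_mem ?_ ?_) (Submodule.mem_sup_right (hE _ hu b hb))
  · exact Submodule.mem_sup_left ⟨W.lie_mem hwW haW, lie_mem_lowerCentralIdeal_succ hwN ha⟩
  · exact Submodule.mem_sup_right (hz.2 k a ha)

lemma lowerCentralIdeal_one_le_of_le_sup {K : ℕ} (hK : lowerCentralIdeal N K = ⊥)
    (hN : LieSubmodule.toSubmodule N ≤
      W.toSubmodule ⊓ LieSubmodule.toSubmodule N ⊔ LieSubmodule.toSubmodule (shiftTwoIdeal N)) :
    LieSubmodule.toSubmodule (lowerCentralIdeal N 1) ≤ W.toSubmodule := by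
  have step (k : ℕ) : LieSubmodule.toSubmodule (lowerCentralIdeal N (k + 1)) ≤
      W.toSubmodule ⊓ LieSubmodule.toSubmodule (lowerCentralIdeal N (k + 1)) ⊔
        LieSubmodule.toSubmodule (lowerCentralIdeal N (k + 2)) := by
    induction k with
    | zero =>
      refine lowerCentralIdeal_succ_le_sup (fun u hu b hb => ?_) hN hN
      rw [← lie_skew]
      exact neg_mem (hb.2 0 u hu)
    | succ k ih =>
      exact lowerCentralIdeal_succ_le_sup
        (fun u hu b hb => lie_mem_lowerCentralIdeal_succ hu hb) hN ih
  have chain (k : ℕ) : LieSubmodule.toSubmodule (lowerCentralIdeal N 1) ≤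
      W.toSubmodule ⊔ LieSubmodule.toSubmodule (lowerCentralIdeal N (k + 1)) := by
    induction k with
    | zero => exact le_sup_right
    | succ k ih =>
      exact ih.trans <| sup_le le_sup_left <|
        (step k).trans <| sup_le (inf_le_left.trans le_sup_left) le_sup_right
  have hK' : lowerCentralIdeal N (K + 1) = ⊥ :=
    eq_bot_iff.mpr (hK ▸ lowerCentralIdeal_antitone N K.le_succ)
  simpa [hK'] using chain K

end Descent

section Restricted

variable {F L : Type*} [Field F] [LieRing L] [LieAlgebra F L] {p : ℕ} {pm : L → L}

lemma IsPMapping.map_zero (hpm : IsPMapping F L p pm) (hp : p ≠ 0) : pm 0 = 0 := by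
  simpa [zero_pow hp] using hpm.smul_pow 0 0

lemma isPSub_bot (hpm : IsPMapping F L p pm) (hp : p ≠ 0) : IsPSub F pm ⊥ := by
  intro x hx
  rw [LieSubalgebra.mem_bot] at hx ⊢
  rw [hx, hpm.map_zero hp]

lemma isPSub_shiftTwoIdeal (hpm : IsPMapping F L p pm) (hp : p ≠ 0) (N : LieIdeal F L) :
    IsPSub F pm (shiftTwoIdeal N).toLieSubalgebra := by
  intro x hx
  obtain ⟨q, rfl⟩ := Nat.exists_eq_succ_of_ne_zero hp
  refine ⟨fun y => ?_, fun k y hy => ?_⟩ <;> rw [hpm.ad_pow]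
  · rw [pow_succ', Module.End.mul_apply, ad_apply]
    exact hx.1 _
  · exact lowerCentralIdeal_antitone N (by omega) (pow_ad_mem_lowerCentralIdeal hx (q + 1) hy)

lemma IsMaxPSub.le_or_sup_eq_top (hpm : IsPMapping F L p pm) {M : LieSubalgebra F L}
    (hM : IsMaxPSub F pm M) {I : LieIdeal F L} (hI : IsPSub F pm I.toLieSubalgebra) :
    I.toLieSubalgebra ≤ M ∨ M.toSubmodule ⊔ LieSubmodule.toSubmodule I = ⊤ := by
  let T : LieSubalgebra F L :=
    { M.toSubmodule ⊔ LieSubmodule.toSubmodule I with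
      lie_mem' := fun {u v} hu hv => by
        obtain ⟨m, hm, i, hi, rfl⟩ := Submodule.mem_sup.mp hu
        obtain ⟨m', hm', i', hi', rfl⟩ := Submodule.mem_sup.mp hv
        rw [add_lie, lie_add]
        exact add_mem (add_mem (Submodule.mem_sup_left (M.lie_mem hm hm'))
          (Submodule.mem_sup_right (I.lie_mem hi'))) (Submodule.mem_sup_right
            (lie_mem_left F L I _ _ hi)) }
  have hMT : M ≤ T := fun m hm => Submodule.mem_sup_left hm
  have hT : IsPSub F pm T := by
    intro u hu
    obtain ⟨m, hm, i, hi, rfl⟩ := Submodule.mem_sup.mp hu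
    have hspan : LieSubalgebra.lieSpan F L {m, i} ≤ T := by
      rw [LieSubalgebra.lieSpan_le, Set.insert_subset_iff, Set.singleton_subset_iff]
      exact ⟨Submodule.mem_sup_left hm, Submodule.mem_sup_right hi⟩
    rw [show pm (m + i) = (pm (m + i) - pm m - pm i) + pm m + pm i by abel]
    exact add_mem (add_mem (hspan (hpm.add_pm m i)) (hMT (hM.1 m hm)))
      (Submodule.mem_sup_right (hI i hi))
  rcases hMT.lt_or_eq with hlt | heq
  · exact Or.inr (congrArg LieSubalgebra.toSubmodule (hM.2.2 T hT hlt))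
  · exact Or.inl fun x hx => heq ▸ Submodule.mem_sup_right hx

variable [IsNoetherian F L] {N : LieIdeal F L}

lemma shiftTwoIdeal_le_of_isNilradical (hN : IsNilradical F L N) : shiftTwoIdeal N ≤ N := by
  have := hN.1
  obtain ⟨K, hK⟩ := exists_lowerCentralIdeal_eq_bot N
  exact le_sup_right.trans (hN.2 _ (isNilpotent_sup_shiftTwoIdeal hK))

lemma lowerCentralIdeal_one_le_of_isMaxPSub (hpm : IsPMapping F L p pm) (hp : p ≠ 0)
    (hN : IsNilradical F L N) {M : LieSubalgebra F L} (hM : IsMaxPSub F pm M) :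
    LieSubmodule.toSubmodule (lowerCentralIdeal N 1) ≤ M.toSubmodule := by
  have := hN.1
  obtain ⟨K, hK⟩ := exists_lowerCentralIdeal_eq_bot N
  have hC : LieSubmodule.toSubmodule (shiftTwoIdeal N) ≤ LieSubmodule.toSubmodule N :=
    shiftTwoIdeal_le_of_isNilradical hN
  rcases hM.le_or_sup_eq_top hpm (isPSub_shiftTwoIdeal hpm hp N) with hCM | hMC
  · exact fun x hx => hCM (lowerCentralIdeal_one_le_shiftTwoIdeal hx)
  · refine lowerCentralIdeal_one_le_of_le_sup hK ?_
    rw [sup_comm, ← sup_inf_assoc_of_le _ hC, sup_comm, hMC, top_inf_eq]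

end Restricted

theorem nilradical_abelian_of_duallyAtomisticP_general
    (F : Type*) [Field F] (L : Type*) [LieRing L] [LieAlgebra F L]
    [FiniteDimensional F L] (p : ℕ) [Fact p.Prime]
    (pm : L → L) (hpm : IsPMapping F L p pm)
    (h : DuallyAtomisticP F L pm)
    (N : LieIdeal F L) (hN : IsNilradical F L N) :
    IsLieAbelian N := by
  have hp : p ≠ 0 := (Fact.out : p.Prime).ne_zero
  obtain ⟨𝓜, h𝓜, hbot⟩ := h ⊥ (isPSub_bot hpm hp)
  rw [LieSubmodule.lie_abelian_iff_lie_self_eq_bot, ← lowerCentralIdeal_one, eq_bot_iff]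
  intro x hx
  have hx𝓜 : x ∈ sInf 𝓜 := by
    rw [← SetLike.mem_coe, LieSubalgebra.coe_sInf, Set.mem_iInter₂]
    exact fun M hM => lowerCentralIdeal_one_le_of_isMaxPSub hpm hp hN (h𝓜 M hM) hx
  rw [← hbot, LieSubalgebra.mem_bot] at hx𝓜
  exact (LieSubmodule.mem_bot x).mpr hx𝓜

/-- the nilradical of a dually atomistic restricted Lie algebra is abelian. -/
theorem nilradical_abelian_of_duallyAtomisticP
    (F : Type*) [Field F] (L : Type*) [LieRing L] [LieAlgebra F L]
    [FiniteDimensional F L] (p : ℕ) [Fact p.Prime] [CharP F p]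
    (pm : L → L) (hpm : IsPMapping F L p pm)
    (h : DuallyAtomisticP F L pm)
    (N : LieIdeal F L) (hN : IsNilradical F L N) :
    IsLieAbelian N :=
  nilradical_abelian_of_duallyAtomisticP_general F L p pm hpm h N hN
end

section
/- Let L be a dually atomistic restricted Lie algebra. Then for every subspace S of the nilradical N(L), the restricted subalgebra ⟨S⟩_p generated by S is a restricted ideal of L. -/
open LieAlgebra Module

/-
Let `Cⱼ = N.lcs L j` be the lower central series of `L` as an `N`-module, which vanishes from some
`m` on since `N` is nilpotent, and let `Zᵢ = N.lcsShift i = {x | ⁅x, Cⱼ⁆ ⊆ Cⱼ₊ᵢ for all j}`.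
Since `ad (x^[p]) = (ad x)^p`, the `Zᵢ` are restricted ideals; moreover `N ⊆ Z₁`,
`⁅Zᵢ, Zⱼ⁆ ⊆ Zᵢ₊ⱼ` and `Zₘ` is central. Hence `⟨S⟩_p ⊆ Z₁`, and by dual atomicity it suffices to
show `⁅x, y⁆ ∈ M` for every maximal restricted subalgebra `M` containing `y ∈ ⟨S⟩_p`. This is
clear if `Z₁ ⊆ M`; otherwise let `i ≤ m` be largest with `Zᵢ ⊈ M`. Maximality forces
`M + Zᵢ = L`, while `⁅Zᵢ, y⁆ ⊆ Zᵢ₊₁ ⊆ M` (or `= 0` if `i = m`).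
-/

section

variable {F : Type*} [Field F] {L : Type*} [LieRing L] [LieAlgebra F L] {pm : L → L} {p : ℕ}

theorem LieSubalgebra.mem_sInf {𝓢 : Set (LieSubalgebra F L)} {x : L} :
    x ∈ sInf 𝓢 ↔ ∀ T ∈ 𝓢, x ∈ T := by
  rw [← SetLike.mem_coe, LieSubalgebra.coe_sInf, Set.mem_iInter₂]
  rfl

theorem pSpan_le {s : Set L} {T : LieSubalgebra F L} (hT : IsPSub F pm T) (hs : s ⊆ T) :
    pSpan F pm s ≤ T :=
  sInf_le ⟨hT, hs⟩

theorem isPSub_pSpan (s : Set L) : IsPSub F pm (pSpan F pm s) :=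
  fun x hx => LieSubalgebra.mem_sInf.mpr fun _ hT => hT.1 x (sInf_le hT hx)

namespace LieSubalgebra

def supLieIdeal (M : LieSubalgebra F L) (I : LieIdeal F L) : LieSubalgebra F L :=
  { M.toSubmodule ⊔ I.toSubmodule with
    lie_mem' := by
      rintro a b ha hb
      obtain ⟨m, hm, z, hz, rfl⟩ := Submodule.mem_sup.mp ha
      obtain ⟨m', hm', z', hz', rfl⟩ := Submodule.mem_sup.mp hb
      have hsplit : ⁅m + z, m' + z'⁆ = ⁅m, m'⁆ + (⁅m, z'⁆ + ⁅z, m' + z'⁆) := by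
        rw [add_lie, lie_add, add_assoc]
      rw [hsplit]
      exact add_mem (Submodule.mem_sup_left (M.lie_mem hm hm'))
        (Submodule.mem_sup_right (add_mem (I.lie_mem hz') (lie_mem_left F L I _ _ hz))) }

theorem mem_supLieIdeal {M : LieSubalgebra F L} {I : LieIdeal F L} {x : L} :
    x ∈ M.supLieIdeal I ↔ ∃ m ∈ M, ∃ z ∈ I, m + z = x :=
  Submodule.mem_sup

end LieSubalgebra

theorem IsPMapping.isPSub_supLieIdeal (hpm : IsPMapping F L p pm) {M : LieSubalgebra F L}
    {I : LieIdeal F L} (hM : IsPSub F pm M) (hI : IsPSub F pm (I : LieSubalgebra F L)) :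
    IsPSub F pm (M.supLieIdeal I) := by
  intro x hx
  obtain ⟨m, hm, z, hz, rfl⟩ := LieSubalgebra.mem_supLieIdeal.mp hx
  have hspan : LieSubalgebra.lieSpan F L {m, z} ≤ M.supLieIdeal I := by
    rw [LieSubalgebra.lieSpan_le, Set.insert_subset_iff, Set.singleton_subset_iff]
    exact ⟨Submodule.mem_sup_left hm, Submodule.mem_sup_right hz⟩
  have hdefect := hspan (hpm.add_pm m z)
  rw [show pm (m + z) = (pm (m + z) - pm m - pm z) + pm m + pm z by abel]
  exact add_mem (add_mem hdefect (Submodule.mem_sup_left (hM m hm)))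
    (Submodule.mem_sup_right (hI z hz))

theorem IsMaxPSub.lie_mem_of_not_le (hpm : IsPMapping F L p pm) {M : LieSubalgebra F L}
    (hM : IsMaxPSub F pm M) {I : LieIdeal F L} (hI : IsPSub F pm (I : LieSubalgebra F L))
    (hIM : ¬ (I : LieSubalgebra F L) ≤ M) {y : L} (hy : y ∈ M) (hIy : ∀ z ∈ I, ⁅z, y⁆ ∈ M)
    (x : L) : ⁅x, y⁆ ∈ M := by
  have hlt : M < M.supLieIdeal I :=
    lt_of_le_not_ge (fun _ hm => Submodule.mem_sup_left hm)
      fun hle => hIM fun _ hz => hle (Submodule.mem_sup_right hz)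
  have htop := hM.2.2 _ (hpm.isPSub_supLieIdeal hM.1 hI) hlt
  obtain ⟨m, hm, z, hz, rfl⟩ :=
    LieSubalgebra.mem_supLieIdeal.mp (htop ▸ LieSubalgebra.mem_top x)
  rw [add_lie]
  exact add_mem (M.lie_mem hm hy) (hIy z hz)

namespace LieIdeal

variable (N : LieIdeal F L)

theorem antitone_lcs : Antitone (N.lcs L) :=
  antitone_nat_of_succ_le fun k => by
    rw [lcs_succ]
    exact LieSubmodule.lie_le_right _ N

theorem lcs_succ_le_map_lcs (k : ℕ) : N.lcs L (k + 1) ≤ (N.lcs N k).map (LieSubmodule.incl N) := by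
  induction k with
  | zero => simpa using LieSubmodule.lie_le_left N ⊤
  | succ k ih =>
    rw [lcs_succ N L (k + 1), lcs_succ N N k, LieSubmodule.map_bracket_eq]
    exact LieSubmodule.mono_lie_right N ih

theorem exists_lcs_succ_eq_bot [LieModule.IsNilpotent N N] : ∃ k, N.lcs L (k + 1) = ⊥ := by
  obtain ⟨k, hk⟩ := LieModule.IsNilpotent.nilpotent F N N
  have hNk : N.lcs N k = ⊥ := by simp [← LieSubmodule.toSubmodule_eq_bot, coe_lcs_eq, hk]
  refine ⟨k, eq_bot_iff.mpr ?_⟩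
  simpa [hNk] using N.lcs_succ_le_map_lcs k

def lcsShift (i : ℕ) : LieIdeal F L where
  carrier := {x | ∀ j, ∀ y ∈ N.lcs L j, ⁅x, y⁆ ∈ N.lcs L (j + i)}
  add_mem' ha hb j y hy := by
    rw [add_lie]
    exact add_mem (ha j y hy) (hb j y hy)
  zero_mem' j y _ := by
    rw [zero_lie]
    exact zero_mem _
  smul_mem' c x hx j y hy := by
    rw [smul_lie]
    exact Submodule.smul_mem _ c (hx j y hy)
  lie_mem {x z} hz j y hy := by
    rw [lie_lie]
    exact sub_mem ((N.lcs L (j + i)).lie_mem (hz j y hy)) (hz j _ ((N.lcs L j).lie_mem hy))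

variable {N}

theorem le_lcsShift_one : N ≤ N.lcsShift 1 :=
  fun _ hx j _ hy => by
    rw [lcs_succ]
    exact LieSubmodule.lie_mem_lie hx hy

theorem lie_mem_lcsShift_add {a b : ℕ} {u v : L} (hu : u ∈ N.lcsShift a)
    (hv : v ∈ N.lcsShift b) : ⁅u, v⁆ ∈ N.lcsShift (a + b) := by
  intro j y hy
  rw [lie_lie]
  exact sub_mem (N.antitone_lcs (by omega) (hu _ _ (hv j y hy)))
    (N.antitone_lcs (by omega) (hv _ _ (hu j y hy)))

theorem ad_pow_apply_mem_lcs {i j : ℕ} {x y : L} (hx : x ∈ N.lcsShift i) (hy : y ∈ N.lcs L j)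
    (n : ℕ) : (ad F L x ^ n) y ∈ N.lcs L (j + i * n) := by
  induction n with
  | zero => simpa using hy
  | succ n ih =>
    rw [pow_succ', Module.End.mul_apply, ad_apply, mul_add_one, ← add_assoc]
    exact hx _ _ ih

theorem lie_eq_zero_of_mem_lcsShift {k : ℕ} (hk : N.lcs L k = ⊥) {z : L}
    (hz : z ∈ N.lcsShift k) (y : L) : ⁅z, y⁆ = 0 := by
  simpa [hk] using hz 0 y (LieSubmodule.mem_top y)

end LieIdeal

theorem IsPMapping.isPSub_lcsShift (hpm : IsPMapping F L p pm) (hp : p ≠ 0)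
    (N : LieIdeal F L) (i : ℕ) : IsPSub F pm (N.lcsShift i : LieSubalgebra F L) := by
  intro x hx j y hy
  rw [hpm.ad_pow]
  have hle : j + i ≤ j + i * p :=
    Nat.add_le_add_left (Nat.le_mul_of_pos_right i (Nat.pos_of_ne_zero hp)) j
  exact N.antitone_lcs hle (LieIdeal.ad_pow_apply_mem_lcs hx hy p)

theorem IsMaxPSub.lie_mem_of_mem_lcsShift_one (hpm : IsPMapping F L p pm) (hp : p ≠ 0)
    {M : LieSubalgebra F L} (hM : IsMaxPSub F pm M) {N : LieIdeal F L} {m : ℕ}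
    (hm : N.lcs L (m + 1) = ⊥) {y : L} (hyM : y ∈ M) (hy : y ∈ N.lcsShift 1) (x : L) :
    ⁅x, y⁆ ∈ M := by
  classical
  by_cases h1 : (N.lcsShift 1 : LieSubalgebra F L) ≤ M
  · exact h1 (lie_mem_right F L _ x y hy)
  have hi := Nat.findGreatest_spec (P := fun i => ¬ (N.lcsShift i : LieSubalgebra F L) ≤ M)
    (Nat.le_add_left 1 m) h1
  set i := Nat.findGreatest (fun i => ¬ (N.lcsShift i : LieSubalgebra F L) ≤ M) (m + 1)
  refine hM.lie_mem_of_not_le hpm (hpm.isPSub_lcsShift hp N i) hi hyM (fun z hz => ?_) x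
  rcases (Nat.findGreatest_le (m + 1) : i ≤ m + 1).eq_or_lt with h | h
  · rw [LieIdeal.lie_eq_zero_of_mem_lcsShift hm (h ▸ hz) y]
    exact zero_mem M
  · have hle : (N.lcsShift (i + 1) : LieSubalgebra F L) ≤ M :=
      not_not.mp (Nat.findGreatest_is_greatest (Nat.lt_succ_self i) h)
    exact hle (LieIdeal.lie_mem_lcsShift_add hz hy)

end

theorem pSpan_of_subspace_of_nilradical_is_ideal_general
    (F : Type*) [Field F] (L : Type*) [LieRing L] [LieAlgebra F L]
    (p : ℕ) [Fact p.Prime]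
    (pm : L → L) (hpm : IsPMapping F L p pm)
    (h : DuallyAtomisticP F L pm)
    (N : LieIdeal F L) (hN : IsNilradical F L N)
    (S : Submodule F L) (hS : S ≤ N.toSubmodule) :
    ∀ (x : L) (y : L), y ∈ pSpan F pm (S : Set L) → ⁅x, y⁆ ∈ pSpan F pm (S : Set L) := by
  intro x y hy
  have hp : p ≠ 0 := (Fact.out : p.Prime).ne_zero
  have : LieModule.IsNilpotent N N := hN.1
  obtain ⟨m, hm⟩ := N.exists_lcs_succ_eq_bot
  have hy1 : y ∈ N.lcsShift 1 :=
    pSpan_le (hpm.isPSub_lcsShift hp N 1) (fun s hs => LieIdeal.le_lcsShift_one (hS hs)) hy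
  obtain ⟨𝓜, h𝓜, hsInf⟩ := h _ (isPSub_pSpan (S : Set L))
  rw [hsInf, LieSubalgebra.mem_sInf] at hy ⊢
  exact fun M hM => (h𝓜 M hM).lie_mem_of_mem_lcsShift_one hpm hp hm (hy M hM) hy1 x

/-- for a dually atomistic restricted Lie algebra, the restricted subalgebra
generated by any subspace of the nilradical is a restricted ideal. -/
theorem pSpan_of_subspace_of_nilradical_is_ideal
    (F : Type*) [Field F] (L : Type*) [LieRing L] [LieAlgebra F L]
    [FiniteDimensional F L] (p : ℕ) [Fact p.Prime] [CharP F p]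
    (pm : L → L) (hpm : IsPMapping F L p pm)
    (h : DuallyAtomisticP F L pm)
    (N : LieIdeal F L) (hN : IsNilradical F L N)
    (S : Submodule F L) (hS : S ≤ N.toSubmodule) :
    ∀ (x : L) (y : L), y ∈ pSpan F pm (S : Set L) → ⁅x, y⁆ ∈ pSpan F pm (S : Set L) :=
  pSpan_of_subspace_of_nilradical_is_ideal_general F L p pm hpm h N hN S hS
end

section
/- Let L be a perfect restricted Lie algebra over a field of characteristic p > 0 such that every (ordinary) subalgebra of L is an intersection of maximal subalgebras. Then every subalgebra of L is a restricted subalgebra (closed under the p-th power map). -/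
open LieAlgebra Module

/-!
If `x` lies in a subalgebra `M`, then `ad (x^[p]) = (ad x)^p` preserves `M`, so `x^[p]` normalizes
`M`. A maximal subalgebra `M` of a perfect Lie algebra is self-normalizing: for `z` normalizing `M`
but outside it, `M + F z` is a subalgebra strictly above `M`, hence all of `L`, and since `M` is an
ideal of codimension one in it, `[L, L] ⊆ M`, so `M = L`. Thus maximal subalgebras are restricted,
and so is every intersection of them, which by hypothesis is every subalgebra.
-/

namespace LieSubalgebra

variable {F L : Type*} [Field F] [LieRing L] [LieAlgebra F L]

lemma ad_pow_apply_mem (M : LieSubalgebra F L) {x y : L} (hx : x ∈ M) (hy : y ∈ M) (n : ℕ) :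
    (ad F L x ^ n) y ∈ M := by
  induction n with
  | zero => simpa using hy
  | succ n ih =>
    rw [pow_succ', Module.End.mul_apply]
    exact M.lie_mem hx ih

lemma lie_mem_of_mem_span_singleton_sup {M : LieSubalgebra F L} {z a b : L}
    (hz : z ∈ M.normalizer) (ha : a ∈ F ∙ z ⊔ M.toSubmodule) (hb : b ∈ F ∙ z ⊔ M.toSubmodule) :
    ⁅a, b⁆ ∈ M := by
  obtain ⟨u, hu, v, hv, rfl⟩ := Submodule.mem_sup.mp ha
  obtain ⟨u', hu', w, hw, rfl⟩ := Submodule.mem_sup.mp hb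
  obtain ⟨s, rfl⟩ := Submodule.mem_span_singleton.mp hu
  obtain ⟨t, rfl⟩ := Submodule.mem_span_singleton.mp hu'
  simp only [add_lie, lie_add, smul_lie, lie_smul, lie_self, smul_zero, zero_add]
  exact M.add_mem (M.smul_mem t ((M.mem_normalizer_iff' z).mp hz v hv))
    (M.add_mem (M.smul_mem s ((M.mem_normalizer_iff z).mp hz w hw)) (M.lie_mem hv hw))

lemma eq_top_of_forall_lie_mem (hperf : derivedSeries F L 1 = ⊤) {M : LieSubalgebra F L}
    (hM : ∀ a b : L, ⁅a, b⁆ ∈ M) : M = ⊤ := by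
  have hspan : Submodule.span F {⁅a, b⁆ | (a : L) (b : L)} ≤ M.toSubmodule :=
    Submodule.span_le.mpr <| by
      rintro _ ⟨a, b, rfl⟩
      exact hM a b
  rw [← coe_derivedSeries_one_eq, hperf] at hspan
  exact eq_top_iff.mpr fun a _ => hspan (LieSubmodule.mem_top (R := F) (L := L) a)

lemma normalizer_eq_self_of_isCoatom (hperf : derivedSeries F L 1 = ⊤) {M : LieSubalgebra F L}
    (hM : IsCoatom M) : M.normalizer = M := by
  refine le_antisymm (fun z hz => ?_) M.le_normalizer
  by_contra hzM
  let K : LieSubalgebra F L :=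
    { F ∙ z ⊔ M.toSubmodule with lie_mem' := lie_mem_sup_of_mem_normalizer hz }
  have hMK : M < K := lt_of_le_of_ne (fun _ => Submodule.mem_sup_right) fun hMK =>
    hzM (hMK ▸ Submodule.mem_sup_left (Submodule.mem_span_singleton_self z))
  have hK : ∀ a : L, a ∈ F ∙ z ⊔ M.toSubmodule := fun a => by
    change a ∈ K
    rw [hM.2 K hMK]
    exact mem_top a
  exact hM.1 (eq_top_of_forall_lie_mem hperf fun a b =>
    lie_mem_of_mem_span_singleton_sup hz (hK a) (hK b))

end LieSubalgebra

lemma IsPSub.sInf {F L : Type*} [Field F] [LieRing L] [LieAlgebra F L] {pm : L → L}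
    {𝓜 : Set (LieSubalgebra F L)} (h𝓜 : ∀ M ∈ 𝓜, IsPSub F pm M) : IsPSub F pm (sInf 𝓜) := by
  intro x hx
  rw [← SetLike.mem_coe, LieSubalgebra.coe_sInf, Set.mem_iInter₂] at hx ⊢
  exact fun M hM => h𝓜 M hM x (hx M hM)

lemma IsPMapping.isPSub_of_normalizer_le {F L : Type*} [Field F] [LieRing L] [LieAlgebra F L]
    {p : ℕ} {pm : L → L} (hpm : IsPMapping F L p pm) {M : LieSubalgebra F L}
    (hM : M.normalizer ≤ M) : IsPSub F pm M := fun x hx =>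
  hM <| (M.mem_normalizer_iff _).mpr fun y hy => by
    rw [hpm.ad_pow]
    exact M.ad_pow_apply_mem hx hy p

theorem subalgebras_restricted_of_perfect_restricted_duallyAtomistic_general
    (F : Type*) [Field F] (L : Type*) [LieRing L] [LieAlgebra F L]
    (p : ℕ)
    (pm : L → L) (hpm : IsPMapping F L p pm)
    (hperf : LieAlgebra.derivedSeries F L 1 = ⊤)
    (h : DuallyAtomistic F L) :
    ∀ S : LieSubalgebra F L, IsPSub F pm S := by
  intro S
  obtain ⟨𝓜, h𝓜, rfl⟩ := h S
  exact IsPSub.sInf fun M hM =>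
    hpm.isPSub_of_normalizer_le (LieSubalgebra.normalizer_eq_self_of_isCoatom hperf (h𝓜 M hM)).le

/-- in a perfect restricted Lie algebra in which every ordinary subalgebra is
an intersection of maximal subalgebras, every subalgebra is restricted. -/
theorem subalgebras_restricted_of_perfect_restricted_duallyAtomistic
    (F : Type*) [Field F] (L : Type*) [LieRing L] [LieAlgebra F L]
    [FiniteDimensional F L] (p : ℕ) [Fact p.Prime] [CharP F p]
    (pm : L → L) (hpm : IsPMapping F L p pm)
    (hperf : LieAlgebra.derivedSeries F L 1 = ⊤)
    (h : DuallyAtomistic F L) :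
    ∀ S : LieSubalgebra F L, IsPSub F pm S :=
  subalgebras_restricted_of_perfect_restricted_duallyAtomistic_general F L p pm hpm hperf h
end

section
/- If S is a restricted subalgebra of a restricted Lie algebra L, then the core S_L (the largest ideal of L contained in S) is a restricted ideal of L. -/
open LieAlgebra Module

/-! For `x ∈ I` and `p > 0`, `⁅L, x^[p]⁆ = (ad x)^p L ⊆ ad x L ⊆ I`, so `I + F x^[p]` is again an
ideal; it lies in `S` because `S` is closed under the `p`-map, and maximality of the core `I`
forces `x^[p] ∈ I`. -/

section

variable {F L : Type*} [Field F] [LieRing L] [LieAlgebra F L]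

def LieIdeal.supSpanSingleton (I : LieIdeal F L) (z : L) (hz : ∀ y : L, ⁅y, z⁆ ∈ I) :
    LieIdeal F L where
  toSubmodule := I.toSubmodule ⊔ Submodule.span F {z}
  lie_mem {y m} hm := by
    obtain ⟨i, hi, w, hw, rfl⟩ := Submodule.mem_sup.mp hm
    obtain ⟨c, rfl⟩ := Submodule.mem_span_singleton.mp hw
    rw [lie_add, lie_smul]
    exact Submodule.mem_sup_left (add_mem (I.lie_mem hi) (I.smul_mem c (hz y)))

theorem IsPMapping.lie_apply_mem_of_mem {p : ℕ} {pm : L → L} (hpm : IsPMapping F L p pm)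
    (hp : p ≠ 0) {I : LieIdeal F L} {x : L} (hx : x ∈ I) (y : L) : ⁅y, pm x⁆ ∈ I := by
  obtain ⟨q, rfl⟩ := Nat.exists_eq_succ_of_ne_zero hp
  rw [← lie_skew, hpm.ad_pow, pow_succ', Module.End.mul_apply]
  exact neg_mem (lie_mem_left F L I x _ hx)

end

theorem core_of_restricted_subalgebra_is_restricted_general
    (F : Type*) [Field F] (L : Type*) [LieRing L] [LieAlgebra F L]
    (p : ℕ) [Fact p.Prime]
    (pm : L → L) (hpm : IsPMapping F L p pm)
    (S : LieSubalgebra F L) (hS : IsPSub F pm S)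
    (I : LieIdeal F L) (hIS : ∀ x ∈ I, x ∈ S)
    (hImax : ∀ J : LieIdeal F L, (∀ x ∈ J, x ∈ S) → J ≤ I) :
    ∀ x ∈ I, pm x ∈ I := by
  intro x hx
  let J := I.supSpanSingleton (pm x) (hpm.lie_apply_mem_of_mem (Fact.out : p.Prime).ne_zero hx)
  have hJS : J.toSubmodule ≤ S.toSubmodule :=
    sup_le (fun i hi ↦ hIS i hi) (Submodule.span_singleton_le_iff_mem _ _ |>.mpr (hS x (hIS x hx)))
  exact hImax J (fun z hz ↦ hJS hz) (Submodule.mem_sup_right (Submodule.mem_span_singleton_self _))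

/-- the core (largest ideal of `L` contained in `S`) of a restricted
subalgebra `S` is a restricted ideal. -/
theorem core_of_restricted_subalgebra_is_restricted
    (F : Type*) [Field F] (L : Type*) [LieRing L] [LieAlgebra F L]
    [FiniteDimensional F L] (p : ℕ) [Fact p.Prime] [CharP F p]
    (pm : L → L) (hpm : IsPMapping F L p pm)
    (S : LieSubalgebra F L) (hS : IsPSub F pm S)
    (I : LieIdeal F L) (hIS : ∀ x ∈ I, x ∈ S)
    (hImax : ∀ J : LieIdeal F L, (∀ x ∈ J, x ∈ S) → J ≤ I) :
    ∀ x ∈ I, pm x ∈ I :=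
  core_of_restricted_subalgebra_is_restricted_general F L p pm hpm S hS I hIS hImax
end
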